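/- Let F be the measure on ℝ given by F = Σ_{k≥1} k²·3^{2k} (δ_{1/(k²3^k)} + δ_{-1/(k²3^k)}). Then ∫ (x² ∧ |x|) F(dx) = 2 Σ_{k≥1} 1/k² < ∞, while ∫ |x| F(dx) = ∞. -/

import Mathlib

open MeasureTheory Set
open scoped ENNReal NNReal

/-- The Lévy measure `F = Σ_{k≥1} k²·3^{2k} (δ_{1/(k²3^k)} + δ_{-1/(k²3^k)})`
of Example 5.14. (We index by `k = j + 1`, `j : ℕ`.) -/
noncomputable def levyF : Measure ℝ :=
  Measure.sum (fun j : ℕ =>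
    (((j + 1 : ℕ) : ℝ≥0∞) ^ 2 * 3 ^ (2 * (j + 1))) •
      (Measure.dirac ((1 : ℝ) / ((j + 1 : ℕ) ^ 2 * 3 ^ (j + 1)))
        + Measure.dirac (-((1 : ℝ) / ((j + 1 : ℕ) ^ 2 * 3 ^ (j + 1))))))

/-! The `k`-th atom `1/(k²3^k)` carries mass `k²3^{2k}`, so that it contributes `1/k²` to
`∫ x² dF` but `3^k` to `∫ |x| dF`; as all atoms lie in `[-1, 1]`, where `x² ≤ |x|`, the first
integral is the truncated one. -/

theorem lintegral_sum_smul_dirac_add_dirac_neg {α : Type*} [MeasurableSpace α]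
    [MeasurableSingletonClass α] [Neg α] (c : ℕ → ℝ≥0∞) (a : ℕ → α) {f : α → ℝ≥0∞}
    (hf : ∀ x, f (-x) = f x) :
    ∫⁻ x, f x ∂Measure.sum (fun j => c j • (Measure.dirac (a j) + Measure.dirac (-a j)))
      = 2 * ∑' j, c j * f (a j) := by
  simp only [lintegral_sum_measure, lintegral_smul_measure, lintegral_add_measure,
    lintegral_dirac, hf, ← two_mul, smul_eq_mul, mul_left_comm _ (2 : ℝ≥0∞),
    ENNReal.tsum_mul_left]

theorem ENNReal.tsum_one_div_natCast_succ_sq_ne_top :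
    ∑' j : ℕ, (1 : ℝ≥0∞) / ((j + 1 : ℕ) : ℝ≥0∞) ^ 2 ≠ ⊤ := by
  have hsum : Summable fun j : ℕ => (1 : ℝ) / ((j + 1 : ℕ) : ℝ) ^ 2 :=
    (summable_nat_add_iff (f := fun n : ℕ => 1 / (n : ℝ) ^ 2) 1).mpr
      (Real.summable_one_div_nat_pow.mpr (by norm_num))
  have hterm (j : ℕ) : (1 : ℝ≥0∞) / ((j + 1 : ℕ) : ℝ≥0∞) ^ 2
      = ENNReal.ofReal ((1 : ℝ) / ((j + 1 : ℕ) : ℝ) ^ 2) := by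
    rw [ENNReal.ofReal_div_of_pos (by positivity), ENNReal.ofReal_pow (by positivity),
      ENNReal.ofReal_natCast, ENNReal.ofReal_one]
  rw [tsum_congr hterm, ← ENNReal.ofReal_tsum_of_nonneg (fun _ => by positivity) hsum]
  exact ENNReal.ofReal_ne_top

namespace levyF

noncomputable def atom (j : ℕ) : ℝ := (1 : ℝ) / ((j + 1 : ℕ) ^ 2 * 3 ^ (j + 1))

noncomputable def weight (j : ℕ) : ℝ≥0∞ := ((j + 1 : ℕ) : ℝ≥0∞) ^ 2 * 3 ^ (2 * (j + 1))

theorem eq_sum : levyF = Measure.sum fun j =>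
    weight j • (Measure.dirac (atom j) + Measure.dirac (-atom j)) := rfl

theorem atom_pos (j : ℕ) : 0 < atom j := by
  unfold atom; positivity

theorem atom_le_one (j : ℕ) : atom j ≤ 1 := by
  unfold atom
  rw [div_le_one (by positivity)]
  exact one_le_mul_of_one_le_of_one_le (one_le_pow₀ (by simp)) (one_le_pow₀ (by norm_num))

theorem weight_mul_ofReal_eq (j : ℕ) (y : ℝ) :
    weight j * ENNReal.ofReal y
      = ENNReal.ofReal (((j + 1 : ℕ) : ℝ) ^ 2 * 3 ^ (2 * (j + 1)) * y) := by
  rw [ENNReal.ofReal_mul (by positivity), ENNReal.ofReal_mul (by positivity),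
    ENNReal.ofReal_pow (by positivity), ENNReal.ofReal_pow (by norm_num), ENNReal.ofReal_natCast,
    weight]
  norm_num

theorem weight_mul_atom_sq (j : ℕ) :
    weight j * ENNReal.ofReal (atom j ^ 2) = 1 / ((j + 1 : ℕ) : ℝ≥0∞) ^ 2 := by
  have h : ((j + 1 : ℕ) : ℝ) ^ 2 * 3 ^ (2 * (j + 1)) * atom j ^ 2
      = (((j + 1 : ℕ) : ℝ) ^ 2)⁻¹ := by
    unfold atom; field_simp; ring
  rw [weight_mul_ofReal_eq, h, ENNReal.ofReal_inv_of_pos (by positivity),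
    ENNReal.ofReal_pow (by positivity), ENNReal.ofReal_natCast, one_div]

theorem weight_mul_atom (j : ℕ) :
    weight j * ENNReal.ofReal (atom j) = 3 ^ (j + 1) := by
  have h : ((j + 1 : ℕ) : ℝ) ^ 2 * 3 ^ (2 * (j + 1)) * atom j = 3 ^ (j + 1) := by
    unfold atom; field_simp; ring
  rw [weight_mul_ofReal_eq, h, ENNReal.ofReal_pow (by norm_num)]
  norm_num

end levyF

open levyF in
/-- `∫ (x² ∧ |x|) F(dx) = 2 Σ_{k≥1} 1/k² < ∞`, while `∫ |x| F(dx) = ∞`. -/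
theorem stmt_3 :
    (∫⁻ x, ENNReal.ofReal (min (x ^ 2) |x|) ∂levyF
        = 2 * ∑' j : ℕ, (1 : ℝ≥0∞) / ((j + 1 : ℕ) : ℝ≥0∞) ^ 2) ∧
    (2 * ∑' j : ℕ, (1 : ℝ≥0∞) / ((j + 1 : ℕ) : ℝ≥0∞) ^ 2 < ⊤) ∧
    (∫⁻ x, ENNReal.ofReal |x| ∂levyF = ⊤) := by
  refine ⟨?_, ENNReal.mul_lt_top (by norm_num) ENNReal.tsum_one_div_natCast_succ_sq_ne_top.lt_top,
    ?_⟩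
  · rw [eq_sum, lintegral_sum_smul_dirac_add_dirac_neg _ _ (by simp)]
    congr 1
    refine tsum_congr fun j => ?_
    have hsq : min (atom j ^ 2) |atom j| = atom j ^ 2 := by
      rw [abs_of_pos (atom_pos j), min_eq_left (pow_le_of_le_one (atom_pos j).le (atom_le_one j)
        two_ne_zero)]
    rw [hsq, weight_mul_atom_sq]
  · rw [eq_sum, lintegral_sum_smul_dirac_add_dirac_neg _ _ (by simp)]
    refine ENNReal.mul_eq_top.mpr (Or.inl ⟨two_ne_zero, ?_⟩)
    rw [eq_top_iff, ← ENNReal.tsum_const_eq_top_of_ne_zero (α := ℕ) one_ne_zero]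
    refine ENNReal.tsum_le_tsum fun j => ?_
    rw [abs_of_pos (atom_pos j), weight_mul_atom]
    exact one_le_pow₀ (by norm_num)
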